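/- Let β ≤ α be an infinite cardinal and let G be one of the Grassmannians G_β(V) or G^β(V). If X, Y ∈ G satisfy X ∩ Y ≠ 0 and X ∩ Y ∉ G, then there exists Z ∈ G such that X ∩ Y ⊆ Z, Z ∩ X ∈ G, and Z ∩ Y ∈ G. -/

import Mathlib

/- Setting: `V` is a left vector space over a division ring `K` whose dimension
`α = Module.rank K V` is an infinite cardinal. -/

universe u v w

section Defs

variable (K : Type u) (V : Type v) [DivisionRing K] [AddCommGroup V] [Module K V]

/-- `B ⊆ V` is a basis of `V`, given as a set of vectors. -/
def IsBasisSet (B : Set V) : Prop :=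
  LinearIndependent K ((↑) : B → V) ∧ Submodule.span K B = ⊤

/-- The Grassmannian `G_β(V)`: all subspaces of dimension `β` and codimension `α`. -/
def Gsub (β : Cardinal.{v}) : Set (Submodule K V) :=
  {X | Module.rank K ↥X = β ∧ Module.rank K (V ⧸ X) = Module.rank K V}

/-- The Grassmannian `G^β(V)`: all subspaces of dimension `α` and codimension `β`. -/
def Gsup (β : Cardinal.{v}) : Set (Submodule K V) :=
  {X | Module.rank K ↥X = Module.rank K V ∧ Module.rank K (V ⧸ X) = β}

/-- The apartment of a Grassmannian `G` defined by a basis `B`: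
all elements of `G` spanned by subsets of `B`. -/
def apartmentOf (G : Set (Submodule K V)) (B : Set V) : Set (Submodule K V) :=
  {X | X ∈ G ∧ ∃ S ⊆ B, X = Submodule.span K S}

end Defs

variable {K : Type u} {V : Type v} [DivisionRing K] [AddCommGroup V] [Module K V]

/-! The codimension of `X ∩ Y` is at most the sum of the codimensions, so for `X, Y ∈ G^β` it
is `β`; then `X ∩ Y ∉ G^β` means `dim (X ∩ Y) < α`, which forces `β = α`, and `G^α = G_α`.
In `G_β` the condition `X ∩ Y ∉ G_β` means `dim (X ∩ Y) < β`. Split a complement of `X ∩ Y` in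
`Y` into two disjoint halves of dimension `β`, let `U` be `X ∩ Y` plus the first half and `W` the
second; then `Z = X + U` works, since `Z ∩ X = X`, `Z ∩ Y = U`, and `W` embeds into `V / Z`. -/

open Cardinal Submodule

namespace Submodule

theorem rank_quotient_mono {p q : Submodule K V} (h : p ≤ q) :
    Module.rank K (V ⧸ q) ≤ Module.rank K (V ⧸ p) :=
  LinearMap.rank_le_of_surjective (factor h) (factor_surjective h)

theorem rank_quotient_inf_le (p q : Submodule K V) :
    Module.rank K (V ⧸ (p ⊓ q)) ≤ Module.rank K (V ⧸ p) + Module.rank K (V ⧸ q) := by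
  let f := p.mkQ.prod q.mkQ
  have hker : LinearMap.ker f = p ⊓ q := by
    simp only [f, LinearMap.ker_prod, ker_mkQ]
  calc Module.rank K (V ⧸ (p ⊓ q)) = Module.rank K (LinearMap.range f) :=
        hker ▸ f.quotKerEquivRange.rank_eq
    _ ≤ Module.rank K ((V ⧸ p) × (V ⧸ q)) := (LinearMap.range f).rank_le
    _ = Module.rank K (V ⧸ p) + Module.rank K (V ⧸ q) := rank_prod'

theorem rank_quotient_eq_rank_of_le {p q : Submodule K V} (h : p ≤ q)
    (hq : Module.rank K (V ⧸ q) = Module.rank K V) : Module.rank K (V ⧸ p) = Module.rank K V :=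
  (rank_quotient_le p).antisymm (hq ▸ rank_quotient_mono h)

theorem rank_le_rank_quotient_of_disjoint {p q : Submodule K V} (h : Disjoint p q) :
    Module.rank K p ≤ Module.rank K (V ⧸ q) := by
  refine (q.mkQ.comp p.subtype).rank_le_of_injective ?_
  rw [← LinearMap.ker_eq_bot, LinearMap.ker_comp, ker_mkQ, ← disjoint_iff_comap_eq_bot]
  exact h

theorem rank_quotient_eq_rank_of_rank_le {p : Submodule K V}
    (hinf : ℵ₀ ≤ Module.rank K (V ⧸ p)) (h : Module.rank K p ≤ Module.rank K (V ⧸ p)) :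
    Module.rank K (V ⧸ p) = Module.rank K V := by
  rw [← rank_quotient_add_rank_of_divisionRing p, add_eq_left hinf h]

theorem exists_disjoint_le_rank_eq (p : Submodule K V) (hp : ℵ₀ ≤ Module.rank K p) :
    ∃ q r : Submodule K V, q ≤ p ∧ r ≤ p ∧ Disjoint q r ∧
      Module.rank K q = Module.rank K p ∧ Module.rank K r = Module.rank K p := by
  let ι := Module.Free.ChooseBasisIndex K p
  let b := Module.Free.chooseBasis K p
  have hι : Module.rank K p = #ι := Module.Free.rank_eq_card_chooseBasisIndex K p
  obtain ⟨e⟩ : Nonempty (ι ⊕ ι ≃ ι) :=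
    Cardinal.eq.mp (by rw [mk_sum, lift_id, ← hι, add_eq_self hp])
  let v := p.subtype ∘ b ∘ e
  have hv : LinearIndependent K v := (b.linearIndependent.comp e e.injective).map' _ p.ker_subtype
  have hle (s : Set (ι ⊕ ι)) : span K (v '' s) ≤ p :=
    span_le.mpr (by rintro _ ⟨i, -, rfl⟩; exact (b _).2)
  have hrank {f : ι → ι ⊕ ι} (hf : Function.Injective f) :
      Module.rank K (span K (v '' Set.range f)) = Module.rank K p := by
    rw [← Set.range_comp, rank_span (hv.comp f hf), mk_range_eq _ (hv.comp f hf).injective, hι]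
  exact ⟨_, _, hle _, hle _, hv.disjoint_span_image Set.isCompl_range_inl_range_inr.disjoint,
    hrank Sum.inl_injective, hrank Sum.inr_injective⟩

theorem exists_le_disjoint_of_rank_lt {p q : Submodule K V} (hpq : p ≤ q)
    (hq : ℵ₀ ≤ Module.rank K q) (hp : Module.rank K p < Module.rank K q) :
    ∃ r s : Submodule K V, p ≤ r ∧ r ≤ q ∧ s ≤ q ∧ Disjoint r s ∧
      Module.rank K r = Module.rank K q ∧ Module.rank K s = Module.rank K q := by
  obtain ⟨c₀, hc₀⟩ := p.exists_isCompl
  set c := c₀ ⊓ q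
  have hsup : p ⊔ c = q := by rw [← sup_inf_assoc_of_le _ hpq, hc₀.sup_eq_top, top_inf_eq]
  have hdisj : Disjoint p c := hc₀.disjoint.mono_right inf_le_left
  have hc : Module.rank K c = Module.rank K q := by
    refine (rank_mono inf_le_right).antisymm (not_lt.mp fun hlt => ?_)
    have := rank_sup_add_rank_inf_eq p c
    rw [hsup, hdisj.eq_bot, rank_bot, add_zero] at this
    exact (add_lt_of_lt hq hp hlt).ne this.symm
  obtain ⟨r, s, hr, hs, hrs, hr', hs'⟩ := exists_disjoint_le_rank_eq c (hc ▸ hq)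
  have hprq : p ⊔ r ≤ q := sup_le hpq (hr.trans inf_le_right)
  exact ⟨p ⊔ r, s, le_sup_left, hprq, hs.trans inf_le_right,
    hrs.disjoint_sup_left_of_disjoint_sup_right (hdisj.mono_right (sup_le hr hs)),
    (rank_mono hprq).antisymm (hc ▸ hr' ▸ rank_mono le_sup_right), hs'.trans hc⟩

end Submodule

theorem rank_lt_of_le_of_notMem_Gsub {β : Cardinal.{v}} {p X : Submodule K V} (h : p ≤ X)
    (hX : X ∈ Gsub K V β) (hp : p ∉ Gsub K V β) : Module.rank K p < β :=
  (hX.1 ▸ rank_mono h).lt_of_ne fun hβ => hp ⟨hβ, rank_quotient_eq_rank_of_le h hX.2⟩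

theorem exists_mem_Gsub_of_inf_notMem {β : Cardinal.{v}} (hβ : ℵ₀ ≤ β)
    {X Y : Submodule K V} (hX : X ∈ Gsub K V β) (hY : Y ∈ Gsub K V β)
    (hXY : X ⊓ Y ∉ Gsub K V β) :
    ∃ Z ∈ Gsub K V β, X ⊓ Y ≤ Z ∧ Z ⊓ X ∈ Gsub K V β ∧ Z ⊓ Y ∈ Gsub K V β := by
  have hrank := rank_lt_of_le_of_notMem_Gsub inf_le_left hX hXY
  obtain ⟨U, W, hXYU, hUY, hWY, hUW, hU, hW⟩ :=
    exists_le_disjoint_of_rank_lt inf_le_right (hY.1 ▸ hβ) (hY.1 ▸ hrank)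
  rw [hY.1] at hU hW
  have hZY : (X ⊔ U) ⊓ Y = U := by
    rw [sup_comm, sup_inf_assoc_of_le _ hUY, sup_eq_left.mpr hXYU]
  have hZ : Module.rank K ↥(X ⊔ U) = β := by
    refine le_antisymm ?_ (hX.1 ▸ rank_mono le_sup_left)
    calc Module.rank K ↥(X ⊔ U) ≤ Module.rank K ↥(X ⊔ U) + Module.rank K ↥(X ⊓ U) := le_self_add
      _ = β := by rw [rank_sup_add_rank_inf_eq, hX.1, hU, add_eq_self hβ]
  have hWZ : β ≤ Module.rank K (V ⧸ (X ⊔ U)) := by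
    refine hW ▸ rank_le_rank_quotient_of_disjoint (disjoint_iff_inf_le.mpr ?_)
    calc W ⊓ (X ⊔ U) ≤ W ⊓ ((X ⊔ U) ⊓ Y) :=
          le_inf inf_le_left (le_inf inf_le_right (inf_le_left.trans hWY))
      _ = W ⊓ U := by rw [hZY]
      _ ≤ ⊥ := hUW.symm.le_bot
  refine ⟨X ⊔ U, ⟨hZ, rank_quotient_eq_rank_of_rank_le (hβ.trans hWZ) (hZ ▸ hWZ)⟩,
    hXYU.trans le_sup_right, ?_, ?_⟩
  · rwa [inf_eq_right.mpr le_sup_left]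
  · rw [hZY]
    exact ⟨hU, rank_quotient_eq_rank_of_le hUY hY.2⟩

theorem Gsup_rank_eq_Gsub : Gsup K V (Module.rank K V) = Gsub K V (Module.rank K V) := by
  ext
  simp only [Gsup, Gsub, Set.mem_ofPred_eq, and_comm]

theorem eq_rank_of_inf_notMem_Gsup {β : Cardinal.{v}} (hβ : ℵ₀ ≤ β)
    {X Y : Submodule K V} (hX : X ∈ Gsup K V β) (hY : Y ∈ Gsup K V β)
    (hXY : X ⊓ Y ∉ Gsup K V β) : β = Module.rank K V := by
  have hcodim : Module.rank K (V ⧸ (X ⊓ Y)) = β :=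
    ((rank_quotient_inf_le X Y).trans (by rw [hX.2, hY.2, add_eq_self hβ])).antisymm
      (hX.2 ▸ rank_quotient_mono inf_le_left)
  have hrank : Module.rank K ↥(X ⊓ Y) < Module.rank K V :=
    (Submodule.rank_le _).lt_of_ne fun h => hXY ⟨h, hcodim⟩
  have hβV : β ≤ Module.rank K V := hcodim ▸ rank_quotient_le _
  refine hβV.antisymm (not_lt.mp fun hlt => ?_)
  have := rank_quotient_add_rank_of_divisionRing (X ⊓ Y)
  rw [hcodim] at this
  exact (add_lt_of_lt (hβ.trans hβV) hlt hrank).ne this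

theorem stmt16_general
    (β : Cardinal.{v}) (hβinf : Cardinal.aleph0 ≤ β)
    (G : Set (Submodule K V)) (hG : G = Gsub K V β ∨ G = Gsup K V β) :
    ∀ X ∈ G, ∀ Y ∈ G, X ⊓ Y ≠ ⊥ → X ⊓ Y ∉ G →
      ∃ Z ∈ G, X ⊓ Y ≤ Z ∧ Z ⊓ X ∈ G ∧ Z ⊓ Y ∈ G := by
  intro X hX Y hY _ hXY
  rcases hG with rfl | rfl
  · exact exists_mem_Gsub_of_inf_notMem hβinf hX hY hXY
  · obtain rfl := eq_rank_of_inf_notMem_Gsup hβinf hX hY hXY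
    rw [Gsup_rank_eq_Gsub] at *
    exact exists_mem_Gsub_of_inf_notMem hβinf hX hY hXY

/-- If `X, Y ∈ G` have nonzero intersection which is not an element of `G`, then some
`Z ∈ G` contains `X ∩ Y` and intersects both `X` and `Y` in elements of `G`. -/
theorem stmt16 (hα : Cardinal.aleph0 ≤ Module.rank K V)
    (β : Cardinal.{v}) (hβinf : Cardinal.aleph0 ≤ β) (hβ : β ≤ Module.rank K V)
    (G : Set (Submodule K V)) (hG : G = Gsub K V β ∨ G = Gsup K V β) :
    ∀ X ∈ G, ∀ Y ∈ G, X ⊓ Y ≠ ⊥ → X ⊓ Y ∉ G →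
      ∃ Z ∈ G, X ⊓ Y ≤ Z ∧ Z ⊓ X ∈ G ∧ Z ⊓ Y ∈ G :=
  stmt16_general β hβinf G hG
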